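/- arXiv:1706.01557 — 2 statements merged into one kernel-verified Lean document; each statement's English description precedes it below -/
import Mathlib

section
/- Let n, m, z be nonnegative integers with z ≤ m ≤ n-1, and let λ = [1^{u_1} 2^{u_2} ⋯ z^{u_z}] be a partition of z. The number of m-element subsets I of [n-1] of type λ (i.e., whose maximal runs of consecutive integers, listed with multiplicity, have lengths ℓ such that the multiset {ℓ - 1 : ℓ ≥ 2} equals λ) is the multinomial coefficient C(m-z; u_1, u_2, …, u_z, m-z-Σu_i) times C(n-m, m-z). More precisely, it equals ( (m-z)! / (u_1! u_2! ⋯ u_z! (m-z-ρ)!) ) · C(n-m, m-z), where ρ = Σ_i u_i, provided m ≥ z + ρ. -/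
/-!
Stars and bars with runs. Listing `I = {i₁ < ⋯ < i_m} ⊆ [1, n-1]`, the shifted values
`i_k - (k - 1)` form a multiset on `[1, n-m]`, and the maximal runs of `I` are exactly the
blocks of equal shifted values. So `I` corresponds bijectively to its multiplicity function
`f : [1, n-m] → ℕ` with `∑ f = m`, and runs of length `b` correspond to points with `f x = b`.
Such an `f` of the given type is chosen by picking, length by length, the fibre of each
prescribed value; the remaining `n-m-(m-z)` points get `0`. This gives
`(n-m)! / ((n-m-(m-z))! (m-z-ρ)! ∏ u_j!) = C(n-m, m-z) (m-z)! / ((m-z-ρ)! ∏ u_j!)`.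
-/

/-- For a finite set `I` of naturals and `i : ℕ`, some translate `i + ℓ` is outside `I`. -/
theorem exists_gap (I : Finset ℕ) (i : ℕ) : ∃ ℓ : ℕ, i + ℓ ∉ I :=
  ⟨I.sup id + 1, fun h => by
    have := Finset.le_sup (f := id) h
    simp only [id] at this
    omega⟩

/-- The length of the run of consecutive elements of `I` starting at `i`:
the least `ℓ` with `i + ℓ ∉ I`. -/
def runLen (I : Finset ℕ) (i : ℕ) : ℕ := Nat.find (exists_gap I i)

open scoped Classical

open Finset
open scoped Nat

section Fibers

variable {ι : Type*}

lemma sum_eq_sum_mul_card_filter_add (S : Finset ι) (f : ι → ℕ) (T : Finset ℕ) :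
    ∑ x ∈ S, f x = ∑ t ∈ T, t * #{x ∈ S | f x = t} + ∑ x ∈ S with f x ∉ T, f x := by
  rw [← sum_filter_add_sum_filter_not S (fun x => f x ∈ T),
    ← sum_fiberwise_of_maps_to (g := f) (t := T) fun x hx => (mem_filter.1 hx).2]
  congr 1
  refine sum_congr rfl fun t ht => ?_
  rw [sum_const_nat fun x hx => (mem_filter.1 hx).2, filter_filter, mul_comm]
  congr 2
  exact filter_congr fun x _ => ⟨fun h => h.2, fun h => ⟨h ▸ ht, h⟩⟩

lemma sum_eq_sum_mul_card_filter {S : Finset ι} {f : ι → ℕ} {T : Finset ℕ}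
    (h : ∀ x ∈ S, f x ≠ 0 → f x ∈ T) :
    ∑ x ∈ S, f x = ∑ t ∈ T, t * #{x ∈ S | f x = t} := by
  rw [sum_eq_sum_mul_card_filter_add S f T, add_eq_left]
  refine sum_eq_zero fun x hx => ?_
  rw [mem_filter] at hx
  by_contra hfx
  exact hx.2 (h x hx.1 hfx)

lemma mem_of_sum_eq_sum_mul_card_filter {S : Finset ι} {f : ι → ℕ} {T : Finset ℕ}
    (h : ∑ x ∈ S, f x = ∑ t ∈ T, t * #{x ∈ S | f x = t}) {x : ι} (hx : x ∈ S)
    (hfx : f x ≠ 0) : f x ∈ T := by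
  have hrest := sum_eq_sum_mul_card_filter_add S f T
  rw [h, left_eq_add, sum_eq_zero_iff] at hrest
  by_contra hT
  exact hfx (hrest x (mem_filter.2 ⟨hx, hT⟩))

variable [DecidableEq ι]

-- Fixing the sum forces every point of `S` outside the prescribed fibres to take the value `0`.
noncomputable def piWithFibers (S : Finset ι) (T : Finset ℕ) (v : ℕ → ℕ) : Finset (ι → ℕ) :=
  {f ∈ S.piAntidiag (∑ t ∈ T, t * v t) | ∀ t ∈ T, #{x ∈ S | f x = t} = v t}

lemma mem_piWithFibers {S : Finset ι} {T : Finset ℕ} {v : ℕ → ℕ} {f : ι → ℕ} :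
    f ∈ piWithFibers S T v ↔
      ∑ x ∈ S, f x = ∑ t ∈ T, t * v t ∧ (∀ x, f x ≠ 0 → x ∈ S) ∧
        ∀ t ∈ T, #{x ∈ S | f x = t} = v t := by
  rw [piWithFibers, mem_filter, mem_piAntidiag, and_assoc]

lemma sum_eq_sum_mul_card_filter_of_mem_piWithFibers {S : Finset ι} {T : Finset ℕ}
    {v : ℕ → ℕ} {f : ι → ℕ} (hf : f ∈ piWithFibers S T v) :
    ∑ x ∈ S, f x = ∑ t ∈ T, t * #{x ∈ S | f x = t} := by
  obtain ⟨hsum, -, hfib⟩ := mem_piWithFibers.1 hf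
  rw [hsum]
  exact sum_congr rfl fun t ht => by rw [hfib t ht]

variable {S S₀ : Finset ι} {T : Finset ℕ} {v : ℕ → ℕ} {b : ℕ}

lemma filter_sdiff_eq_filter {f g : ι → ℕ} {t : ℕ} (hon : ∀ x ∈ S₀, f x = b)
    (hoff : ∀ x ∉ S₀, f x = g x) (htb : t ≠ b) :
    {x ∈ S \ S₀ | g x = t} = {x ∈ S | f x = t} := by
  ext x
  simp only [mem_filter, mem_sdiff]
  constructor
  · rintro ⟨⟨hxS, hx₀⟩, hx⟩
    exact ⟨hxS, (hoff x hx₀).trans hx⟩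
  · rintro ⟨hxS, hx⟩
    have hx₀ : x ∉ S₀ := fun h => htb (hx.symm.trans (hon x h))
    exact ⟨⟨hxS, hx₀⟩, (hoff x hx₀).symm.trans hx⟩

lemma piecewise_zero_mem_piWithFibers {f : ι → ℕ} (hbT : b ∉ T) (hS₀ : S₀ ⊆ S)
    (hf : f ∈ piWithFibers S (insert b T) v) (hfb : {x ∈ S | f x = b} = S₀) :
    S₀.piecewise (0 : ι → ℕ) f ∈ piWithFibers (S \ S₀) T v := by
  obtain ⟨hsum, hsupp, hfib⟩ := mem_piWithFibers.1 hf
  have hon : ∀ x ∈ S₀, f x = b := fun x hx => by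
    rw [← hfb, mem_filter] at hx
    exact hx.2
  have hoff : ∀ x ∉ S₀, f x = S₀.piecewise (0 : ι → ℕ) f x := fun x hx =>
    (piecewise_eq_of_notMem _ _ _ hx).symm
  refine mem_piWithFibers.2 ⟨?_, fun x hx => ?_, fun t ht => ?_⟩
  · have hsplit := sum_sdiff hS₀ (f := f)
    have hcard : #S₀ = v b := hfb ▸ hfib b (mem_insert_self b T)
    rw [sum_congr rfl hon, sum_const, hcard, smul_eq_mul, hsum, sum_insert hbT] at hsplit
    rw [← sum_congr rfl fun x hx => hoff x (mem_sdiff.1 hx).2]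
    linarith
  · by_cases hx₀ : x ∈ S₀
    · simp [hx₀] at hx
    · rw [← hoff x hx₀] at hx
      exact mem_sdiff.2 ⟨hsupp x hx, hx₀⟩
  · rw [filter_sdiff_eq_filter hon hoff fun h => hbT (h ▸ ht), hfib t (mem_insert_of_mem ht)]

lemma piecewise_const_mem_piWithFibers {g : ι → ℕ} (hb : b ≠ 0) (hbT : b ∉ T)
    (hS₀ : S₀ ∈ S.powersetCard (v b)) (hg : g ∈ piWithFibers (S \ S₀) T v) :
    S₀.piecewise (fun _ => b) g ∈ piWithFibers S (insert b T) v ∧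
      {x ∈ S | S₀.piecewise (fun _ => b) g x = b} = S₀ := by
  obtain ⟨hS₀S, hcard⟩ := mem_powersetCard.1 hS₀
  obtain ⟨hsum, hsupp, hfib⟩ := mem_piWithFibers.1 hg
  have hon : ∀ x ∈ S₀, S₀.piecewise (fun _ => b) g x = b := fun x hx =>
    piecewise_eq_of_mem _ _ _ hx
  have hoff : ∀ x ∉ S₀, S₀.piecewise (fun _ => b) g x = g x := fun x hx =>
    piecewise_eq_of_notMem _ _ _ hx
  have hfb : {x ∈ S | S₀.piecewise (fun _ => b) g x = b} = S₀ := by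
    ext x
    rw [mem_filter]
    refine ⟨fun ⟨hxS, hx⟩ => ?_, fun hx => ⟨hS₀S hx, hon x hx⟩⟩
    by_contra hx₀
    rw [hoff x hx₀] at hx
    have hgT := mem_of_sum_eq_sum_mul_card_filter
      (sum_eq_sum_mul_card_filter_of_mem_piWithFibers hg) (mem_sdiff.2 ⟨hxS, hx₀⟩) (hx ▸ hb)
    exact hbT (hx ▸ hgT)
  refine ⟨mem_piWithFibers.2 ⟨?_, fun x hx => ?_, ?_⟩, hfb⟩
  · rw [← sum_sdiff hS₀S, sum_congr rfl fun x hx => hoff x (mem_sdiff.1 hx).2,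
      sum_congr rfl hon, hsum, sum_const, hcard, smul_eq_mul, sum_insert hbT]
    ring
  · by_cases hx₀ : x ∈ S₀
    · exact hS₀S hx₀
    · rw [hoff x hx₀] at hx
      exact (mem_sdiff.1 (hsupp x hx)).1
  · rw [forall_mem_insert, hfb]
    refine ⟨hcard, fun t ht => ?_⟩
    rw [← filter_sdiff_eq_filter hon hoff fun h => hbT (h ▸ ht), hfib t ht]

lemma card_filter_piWithFibers_insert (hb : b ≠ 0) (hbT : b ∉ T)
    (hS₀ : S₀ ∈ S.powersetCard (v b)) :
    #{f ∈ piWithFibers S (insert b T) v | {x ∈ S | f x = b} = S₀} =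
      #(piWithFibers (S \ S₀) T v) := by
  have hS₀S := (mem_powersetCard.1 hS₀).1
  refine card_nbij' (fun f => S₀.piecewise (0 : ι → ℕ) f) (fun g => S₀.piecewise (fun _ => b) g)
    (fun f hf => ?_) (fun g hg => ?_) (fun f hf => ?_) (fun g hg => ?_)
  · rw [coe_filter] at hf
    exact piecewise_zero_mem_piWithFibers hbT hS₀S hf.1 hf.2
  · rw [coe_filter]
    exact piecewise_const_mem_piWithFibers hb hbT hS₀ hg
  · rw [coe_filter] at hf
    funext x
    dsimp only
    by_cases hx : x ∈ S₀
    · rw [piecewise_eq_of_mem _ _ _ hx]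
      rw [← hf.2, mem_filter] at hx
      exact hx.2.symm
    · rw [piecewise_eq_of_notMem _ _ _ hx, piecewise_eq_of_notMem _ _ _ hx]
  · funext x
    dsimp only
    by_cases hx : x ∈ S₀
    · rw [piecewise_eq_of_mem _ _ _ hx, Pi.zero_apply]
      by_contra hgx
      exact (mem_sdiff.1 ((mem_piWithFibers.1 hg).2.1 x (Ne.symm hgx))).2 hx
    · rw [piecewise_eq_of_notMem _ _ _ hx, piecewise_eq_of_notMem _ _ _ hx]

theorem card_piWithFibers_mul_prod_factorial (S : Finset ι) (T : Finset ℕ) (v : ℕ → ℕ)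
    (hT : 0 ∉ T) :
    #(piWithFibers S T v) * ∏ t ∈ T, (v t)! = (#S).descFactorial (∑ t ∈ T, v t) := by
  induction T using Finset.induction_on generalizing S with
  | empty => simp [piWithFibers]
  | insert b T hbT ih =>
    have hb : b ≠ 0 := fun h => hT (h ▸ mem_insert_self b T)
    have hT' : 0 ∉ T := fun h => hT (mem_insert_of_mem h)
    have hmaps : ∀ f ∈ piWithFibers S (insert b T) v, {x ∈ S | f x = b} ∈ S.powersetCard (v b) :=
      fun f hf => mem_powersetCard.2
        ⟨filter_subset _ _, (mem_piWithFibers.1 hf).2.2 b (mem_insert_self b T)⟩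
    have hsdiff : ∀ S₀ ∈ S.powersetCard (v b), #(S \ S₀) = #S - v b := fun S₀ hS₀ => by
      rw [card_sdiff_of_subset (mem_powersetCard.1 hS₀).1, (mem_powersetCard.1 hS₀).2]
    calc #(piWithFibers S (insert b T) v) * ∏ t ∈ insert b T, (v t)!
        = ∑ S₀ ∈ S.powersetCard (v b),
            (#(piWithFibers (S \ S₀) T v) * ∏ t ∈ T, (v t)!) * (v b)! := by
          rw [card_eq_sum_card_fiberwise hmaps, prod_insert hbT, sum_mul]
          refine sum_congr rfl fun S₀ hS₀ => ?_
          rw [card_filter_piWithFibers_insert hb hbT hS₀]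
          ring
      _ = (#S).choose (v b) * ((#S - v b).descFactorial (∑ t ∈ T, v t) * (v b)!) := by
          rw [sum_congr rfl fun S₀ hS₀ => by rw [ih (S \ S₀) hT', hsdiff S₀ hS₀], sum_const,
            card_powersetCard, smul_eq_mul]
      _ = (#S).descFactorial (∑ t ∈ insert b T, v t) := by
          rw [sum_insert hbT, ← Nat.descFactorial_mul_descFactorial (Nat.le_add_right _ _),
            add_tsub_cancel_left, Nat.descFactorial_eq_factorial_mul_choose (#S) (v b)]
          ring

end Fibers

section Blocks

def blockStart (f : ℕ → ℕ) (x : ℕ) : ℕ := x + ∑ y ∈ range x, f y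

def block (f : ℕ → ℕ) (x : ℕ) : Finset ℕ := Ico (blockStart f x) (blockStart f x + f x)

def expand (S : Finset ℕ) (f : ℕ → ℕ) : Finset ℕ := S.biUnion (block f)

variable {S : Finset ℕ} {f : ℕ → ℕ} {i x y : ℕ}

lemma blockStart_succ (f : ℕ → ℕ) (x : ℕ) : blockStart f (x + 1) = blockStart f x + f x + 1 := by
  simp only [blockStart, sum_range_succ]
  ring

lemma blockStart_add_lt (h : x < y) : blockStart f x + f x < blockStart f y := by
  have hmono : Monotone (blockStart f) :=
    monotone_nat_of_le_succ fun x => by rw [blockStart_succ]; omega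
  have := hmono (Nat.succ_le_of_lt h)
  rw [blockStart_succ] at this
  omega

lemma blockStart_injective (f : ℕ → ℕ) : Function.Injective (blockStart f) :=
  StrictMono.injective fun _ _ h => (Nat.le_add_right _ _).trans_lt (blockStart_add_lt h)

lemma mem_block_iff : i ∈ block f x ↔ blockStart f x ≤ i ∧ i < blockStart f x + f x := mem_Ico

lemma eq_of_mem_block (hx : i ∈ block f x) (hy : i ∈ block f y) : x = y := by
  rw [mem_block_iff] at hx hy
  rcases lt_trichotomy x y with h | h | h
  · have := blockStart_add_lt (f := f) h; omega
  · exact h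
  · have := blockStart_add_lt (f := f) h; omega

lemma mem_expand : i ∈ expand S f ↔ ∃ x ∈ S, i ∈ block f x := mem_biUnion

lemma card_expand (S : Finset ℕ) (f : ℕ → ℕ) : #(expand S f) = ∑ x ∈ S, f x := by
  rw [expand, card_biUnion fun x _ y _ hxy =>
    disjoint_left.2 fun _ hx hy => hxy (eq_of_mem_block hx hy)]
  simp [block]

-- Blocks are separated by gaps, so near block `x` the set `expand S f` coincides with it.
lemma mem_expand_iff_mem_block (hx : x ∈ S) (h₁ : blockStart f x ≤ i + 1)
    (h₂ : i ≤ blockStart f x + f x) : i ∈ expand S f ↔ i ∈ block f x := by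
  refine ⟨fun hi => ?_, fun hi => mem_expand.2 ⟨x, hx, hi⟩⟩
  obtain ⟨y, -, hy⟩ := mem_expand.1 hi
  rw [mem_block_iff] at hy
  rcases lt_trichotomy y x with h | rfl | h
  · have := blockStart_add_lt (f := f) h; omega
  · exact mem_block_iff.2 hy
  · have := blockStart_add_lt (f := f) h; omega

lemma runLen_expand_blockStart (hx : x ∈ S) : runLen (expand S f) (blockStart f x) = f x := by
  rw [runLen, Nat.find_eq_iff]
  refine ⟨fun h => ?_, fun t ht h => h ?_⟩
  · rw [mem_expand_iff_mem_block hx (by omega) le_rfl, mem_block_iff] at h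
    omega
  · rw [mem_expand_iff_mem_block hx (by omega) (by omega), mem_block_iff]
    omega

def runCount (I : Finset ℕ) (b : ℕ) : ℕ := #{i ∈ I | i - 1 ∉ I ∧ runLen I i = b}

lemma runCount_expand (h0 : 0 ∉ S) {b : ℕ} (hb : b ≠ 0) :
    runCount (expand S f) b = #{x ∈ S | f x = b} := by
  rw [runCount, ← card_image_of_injective {x ∈ S | f x = b} (blockStart_injective f)]
  congr 1
  ext i
  simp only [mem_filter, mem_image]
  constructor
  · rintro ⟨hi, hprev, hlen⟩
    obtain ⟨x, hx, hix⟩ := mem_expand.1 hi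
    have hstart : blockStart f x = i := by
      by_contra hne
      rw [mem_block_iff] at hix
      exact hprev (mem_expand.2 ⟨x, hx, mem_block_iff.2 ⟨by omega, by omega⟩⟩)
    subst hstart
    exact ⟨x, ⟨hx, (runLen_expand_blockStart hx).symm.trans hlen⟩, rfl⟩
  · rintro ⟨x, ⟨hx, hfx⟩, rfl⟩
    have hx0 : 1 ≤ blockStart f x := (Nat.pos_of_ne_zero fun h => h0 (h ▸ hx)).trans_le
      (Nat.le_add_right _ _)
    refine ⟨mem_expand.2 ⟨x, hx, mem_block_iff.2 ⟨le_rfl, by omega⟩⟩, fun h => ?_,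
      (runLen_expand_blockStart hx).trans hfx⟩
    rw [mem_expand_iff_mem_block hx (by omega) (by omega), mem_block_iff] at h
    omega

end Blocks

section Compress

-- `shift I` sends the `k`-th smallest element `i_k` of `I` to `i_k - (k - 1)`.
def shift (I : Finset ℕ) (i : ℕ) : ℕ := i - #{j ∈ I | j < i}

def compress (I : Finset ℕ) (x : ℕ) : ℕ := #{i ∈ I | shift I i = x}

variable {I S : Finset ℕ} {f : ℕ → ℕ} {i x : ℕ}

lemma card_filter_lt_le (I : Finset ℕ) (i : ℕ) : #{j ∈ I | j < i} ≤ i :=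
  (card_le_card fun _ hj => mem_range.2 (mem_filter.1 hj).2).trans (card_range i).le

lemma shift_mono (I : Finset ℕ) : Monotone (shift I) := by
  intro i i' h
  have hsub : {j ∈ I | j < i'} ⊆ {j ∈ I | j < i} ∪ Ico i i' := fun j hj => by
    rw [mem_filter] at hj
    rw [mem_union, mem_filter, mem_Ico]
    rcases lt_or_ge j i with hji | hji
    exacts [Or.inl ⟨hj.1, hji⟩, Or.inr ⟨hji, hj.2⟩]
  have := (card_le_card hsub).trans (card_union_le _ _)
  have := card_filter_lt_le I i
  rw [Nat.card_Ico] at *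
  unfold shift
  omega

lemma card_filter_lt_eq (I : Finset ℕ) (i : ℕ) :
    #{j ∈ I | j < i} =
      #{j ∈ I | shift I j < shift I i} + #{j ∈ I | j < i ∧ shift I j = shift I i} := by
  rw [← card_filter_add_card_filter_not (s := {j ∈ I | j < i}) (fun j => shift I j < shift I i),
    filter_filter, filter_filter]
  congr 2
  · refine filter_congr fun j _ => ⟨fun h => h.2, fun h => ⟨?_, h⟩⟩
    by_contra hji
    exact (shift_mono I (not_lt.1 hji)).not_gt h
  · exact filter_congr fun j _ => and_congr_right fun hji =>
      ⟨fun h => le_antisymm (shift_mono I hji.le) (not_lt.1 h), fun h => h.not_lt⟩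

lemma sum_range_compress (I : Finset ℕ) (x : ℕ) :
    ∑ y ∈ range x, compress I y = #{j ∈ I | shift I j < x} := by
  rw [card_eq_sum_card_fiberwise (f := shift I) (t := range x) fun j hj =>
    mem_range.2 (mem_filter.1 hj).2]
  refine sum_congr rfl fun y hy => ?_
  rw [compress, filter_filter]
  exact congr_arg card (filter_congr fun j _ => ⟨fun h => ⟨h ▸ mem_range.1 hy, h⟩, fun h => h.2⟩)

lemma mem_block_compress (hi : i ∈ I) : i ∈ block (compress I) (shift I i) := by
  have hlt : #{j ∈ I | j < i ∧ shift I j = shift I i} < compress I (shift I i) := by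
    refine card_lt_card ((ssubset_iff_of_subset fun j hj => ?_).2 ⟨i, ?_, ?_⟩)
    · rw [mem_filter] at hj ⊢
      exact ⟨hj.1, hj.2.2⟩
    · exact mem_filter.2 ⟨hi, rfl⟩
    · simp
  have := card_filter_lt_eq I i
  have := card_filter_lt_le I i
  rw [mem_block_iff, blockStart, sum_range_compress]
  unfold shift at *
  omega

lemma expand_compress (hI : ∀ i ∈ I, shift I i ∈ S) : expand S (compress I) = I :=
  (eq_of_subset_of_card_le (fun i hi => mem_expand.2 ⟨_, hI i hi, mem_block_compress hi⟩)
    (by rw [card_expand]; exact (card_eq_sum_card_fiberwise hI).ge)).symm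

lemma filter_expand_lt_eq (hx : x ∈ S) (hi : i ∈ block f x) :
    {j ∈ expand S f | j < i} = expand {y ∈ S | y < x} f ∪ Ico (blockStart f x) i := by
  ext j
  simp only [mem_filter, mem_union, mem_expand, mem_Ico, mem_block_iff] at hi ⊢
  constructor
  · rintro ⟨⟨y, hy, hj⟩, hji⟩
    rcases lt_trichotomy y x with h | rfl | h
    · exact Or.inl ⟨y, ⟨hy, h⟩, hj⟩
    · exact Or.inr ⟨hj.1, hji⟩
    · have := blockStart_add_lt (f := f) h
      omega
  · rintro (⟨y, hy, hj⟩ | hj)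
    · have := blockStart_add_lt (f := f) hy.2
      exact ⟨⟨y, hy.1, hj⟩, by omega⟩
    · exact ⟨⟨x, hx, hj.1, by omega⟩, hj.2⟩

lemma shift_expand (hf : ∀ y, f y ≠ 0 → y ∈ S) (hx : x ∈ S) (hi : i ∈ block f x) :
    shift (expand S f) i = x := by
  have hdisj : Disjoint (expand {y ∈ S | y < x} f) (Ico (blockStart f x) i) :=
    disjoint_left.2 fun j hj hj' => by
      obtain ⟨y, hy, hjy⟩ := mem_expand.1 hj
      rw [mem_filter] at hy
      rw [mem_block_iff] at hjy
      rw [mem_Ico] at hj'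
      have := blockStart_add_lt (f := f) hy.2
      omega
  have hsum : ∑ y ∈ S with y < x, f y = ∑ y ∈ range x, f y := by
    rw [← sum_filter_of_ne (s := range x) (p := (· ∈ S)) fun y _ hy => hf y hy]
    congr 1
    ext y
    simp only [mem_filter, mem_range]
    tauto
  rw [shift, filter_expand_lt_eq hx hi, card_union_of_disjoint hdisj, card_expand, hsum,
    Nat.card_Ico]
  rw [mem_block_iff] at hi
  unfold blockStart at hi ⊢
  omega

lemma compress_expand (hf : ∀ y, f y ≠ 0 → y ∈ S) : compress (expand S f) = f := by
  funext x
  suffices {i ∈ expand S f | shift (expand S f) i = x} = block f x by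
    rw [compress, this, block, Nat.card_Ico, add_tsub_cancel_left]
  ext i
  rw [mem_filter]
  constructor
  · rintro ⟨hi, rfl⟩
    obtain ⟨y, hy, hiy⟩ := mem_expand.1 hi
    rwa [shift_expand hf hy hiy]
  · intro hi
    have hx : x ∈ S := hf x (by rw [mem_block_iff] at hi; omega)
    exact ⟨mem_expand.2 ⟨x, hx, hi⟩, shift_expand hf hx hi⟩

end Compress

section StarsAndBars

variable {I : Finset ℕ} {f : ℕ → ℕ} {N m : ℕ}

lemma shift_mem_Icc (hI : I ⊆ Icc 1 (N + #I - 1)) {i : ℕ} (hi : i ∈ I) :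
    shift I i ∈ Icc 1 N := by
  have hi' := mem_Icc.1 (hI hi)
  have hbelow : #{j ∈ I | j < i} ≤ i - 1 :=
    calc _ ≤ #(Ico 1 i) := card_le_card fun j hj => by
            rw [mem_filter] at hj
            exact mem_Ico.2 ⟨(mem_Icc.1 (hI hj.1)).1, hj.2⟩
      _ = i - 1 := Nat.card_Ico 1 i
  have habove : #{j ∈ I | ¬ j < i} ≤ N + #I - i :=
    calc _ ≤ #(Icc i (N + #I - 1)) := card_le_card fun j hj => by
            rw [mem_filter] at hj
            exact mem_Icc.2 ⟨not_lt.1 hj.2, (mem_Icc.1 (hI hj.1)).2⟩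
      _ = N + #I - i := by rw [Nat.card_Icc]; omega
  have := card_filter_add_card_filter_not (s := I) (· < i)
  rw [shift, mem_Icc]
  omega

lemma compress_mem_piAntidiag {S : Finset ℕ} (hI : ∀ i ∈ I, shift I i ∈ S) :
    compress I ∈ S.piAntidiag #I := by
  rw [mem_piAntidiag]
  refine ⟨(card_eq_sum_card_fiberwise hI).symm, fun x hx => ?_⟩
  obtain ⟨i, hi⟩ := card_ne_zero.1 hx
  rw [mem_filter] at hi
  exact hi.2 ▸ hI i hi.1

lemma expand_subset_Icc (hf : f ∈ (Icc 1 N).piAntidiag m) :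
    expand (Icc 1 N) f ⊆ Icc 1 (N + m - 1) := by
  rw [mem_piAntidiag] at hf
  intro i hi
  obtain ⟨x, hx, hix⟩ := mem_expand.1 hi
  have hpre : ∑ y ∈ range (x + 1), f y ≤ m := hf.1 ▸ sum_le_sum_of_ne_zero fun y _ hy => hf.2 y hy
  have := blockStart_succ f x
  rw [mem_block_iff] at hix
  rw [mem_Icc] at hx ⊢
  unfold blockStart at *
  omega

theorem card_filter_powerset_eq_card_filter_piAntidiag (N m : ℕ) (P : (ℕ → ℕ) → Prop) :
    #{I ∈ (Icc 1 (N + m - 1)).powerset | #I = m ∧ P fun j => runCount I (j + 1)} =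
      #{f ∈ (Icc 1 N).piAntidiag m | P fun j => #{x ∈ Icc 1 N | f x = j + 1}} := by
  have h0 : 0 ∉ Icc 1 N := by simp
  have hshift : ∀ I ∈ (Icc 1 (N + m - 1)).powerset, #I = m → ∀ i ∈ I, shift I i ∈ Icc 1 N :=
    fun I hI hcard i hi => shift_mem_Icc (hcard ▸ mem_powerset.1 hI) hi
  refine card_nbij' compress (expand (Icc 1 N)) (fun I hI => ?_) (fun f hf => ?_)
    (fun I hI => ?_) (fun f hf => ?_)
  · rw [coe_filter] at hI ⊢
    refine ⟨hI.2.1 ▸ compress_mem_piAntidiag (hshift I hI.1 hI.2.1), ?_⟩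
    convert hI.2.2 using 2 with j
    rw [← runCount_expand h0 j.succ_ne_zero, expand_compress (hshift I hI.1 hI.2.1)]
  · rw [coe_filter] at hf ⊢
    refine ⟨mem_powerset.2 (expand_subset_Icc hf.1),
      by rw [card_expand, (mem_piAntidiag.1 hf.1).1], ?_⟩
    convert hf.2 using 2 with j
    exact runCount_expand h0 j.succ_ne_zero
  · rw [coe_filter] at hI
    exact expand_compress (hshift I hI.1 hI.2.1)
  · rw [coe_filter] at hf
    exact compress_expand (mem_piAntidiag.1 hf.1).2

end StarsAndBars

section RunType

variable {ι : Type*} [DecidableEq ι] {z ρ m : ℕ} {u : ℕ → ℕ}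

lemma Icc_one_succ_eq_insert_map (z : ℕ) :
    Icc 1 (z + 1) = insert 1 ((Icc 1 z).map (addRightEmbedding 1)) := by
  ext t
  simp only [mem_Icc, mem_insert, mem_map, addRightEmbedding_apply]
  constructor
  · intro ht
    rcases eq_or_ne t 1 with rfl | ht1
    · exact Or.inl rfl
    · exact Or.inr ⟨t - 1, by omega, by omega⟩
  · rintro (rfl | ⟨j, hj, rfl⟩) <;> omega

lemma sum_Icc_one_succ (z : ℕ) (g : ℕ → ℕ) :
    ∑ t ∈ Icc 1 (z + 1), g t = g 1 + ∑ j ∈ Icc 1 z, g (j + 1) := by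
  rw [Icc_one_succ_eq_insert_map, sum_insert (by simp), sum_map]
  rfl

lemma prod_Icc_one_succ (z : ℕ) (g : ℕ → ℕ) :
    ∏ t ∈ Icc 1 (z + 1), g t = g 1 * ∏ j ∈ Icc 1 z, g (j + 1) := by
  rw [Icc_one_succ_eq_insert_map, prod_insert (by simp), prod_map]
  rfl

-- The number of runs of length `t`: `c` singletons and `u j` runs of length `j + 1`.
def runCounts (c : ℕ) (u : ℕ → ℕ) (t : ℕ) : ℕ := if t = 1 then c else u (t - 1)

lemma runCounts_succ {c j : ℕ} (hj : j ∈ Icc 1 z) : runCounts c u (j + 1) = u j :=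
  if_neg (by rw [mem_Icc] at hj; omega)

lemma sum_mul_runCounts (hρ : ρ = ∑ j ∈ Icc 1 z, u j) (hz : z = ∑ j ∈ Icc 1 z, j * u j)
    (hm : z + ρ ≤ m) : ∑ t ∈ Icc 1 (z + 1), t * runCounts (m - z - ρ) u t = m := by
  have hzρ : ∑ j ∈ Icc 1 z, (j + 1) * u j = z + ρ := by
    simp only [add_mul, one_mul, sum_add_distrib]
    rw [← hz, ← hρ]
  rw [sum_Icc_one_succ, sum_congr rfl fun j hj => by rw [runCounts_succ hj], hzρ, runCounts,
    if_pos rfl]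
  omega

lemma mem_piWithFibers_runCounts {S : Finset ι} {f : ι → ℕ} (hρ : ρ = ∑ j ∈ Icc 1 z, u j)
    (hz : z = ∑ j ∈ Icc 1 z, j * u j) (hu : ∀ j, z < j → u j = 0) (hm : z + ρ ≤ m)
    (hf : f ∈ S.piAntidiag m) (hfib : ∀ j, 1 ≤ j → #{x ∈ S | f x = j + 1} = u j) :
    f ∈ piWithFibers S (Icc 1 (z + 1)) (runCounts (m - z - ρ) u) := by
  obtain ⟨hsumf, hsupp⟩ := mem_piAntidiag.1 hf
  have hvals : ∀ x ∈ S, f x ≠ 0 → f x ∈ Icc 1 (z + 1) := fun x hx hfx => by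
    rw [mem_Icc]
    by_contra hbig
    have hempty := hfib (f x - 1) (by omega)
    rw [hu _ (by omega), Finset.card_eq_zero, filter_eq_empty_iff] at hempty
    exact hempty hx (by omega)
  have hdecomp := sum_eq_sum_mul_card_filter hvals
  rw [hsumf, ← sum_mul_runCounts hρ hz hm, sum_Icc_one_succ, sum_Icc_one_succ] at hdecomp
  have hlong : ∑ j ∈ Icc 1 z, (j + 1) * #{x ∈ S | f x = j + 1} =
      ∑ j ∈ Icc 1 z, (j + 1) * runCounts (m - z - ρ) u (j + 1) :=
    sum_congr rfl fun j hj => by rw [hfib j (mem_Icc.1 hj).1, runCounts_succ hj]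
  refine mem_piWithFibers.2 ⟨hsumf.trans (sum_mul_runCounts hρ hz hm).symm, hsupp, fun t ht => ?_⟩
  rw [mem_Icc] at ht
  rcases eq_or_ne t 1 with rfl | ht1
  · omega
  · have hj : t - 1 ∈ Icc 1 z := mem_Icc.2 ⟨by omega, by omega⟩
    rw [show t = t - 1 + 1 by omega, runCounts_succ hj, hfib _ (mem_Icc.1 hj).1]

lemma card_filter_eq_of_mem_piWithFibers_runCounts {S : Finset ι} {f : ι → ℕ}
    (hu : ∀ j, z < j → u j = 0) {c : ℕ} (hf : f ∈ piWithFibers S (Icc 1 (z + 1)) (runCounts c u))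
    {j : ℕ} (hj : 1 ≤ j) : #{x ∈ S | f x = j + 1} = u j := by
  by_cases hjz : j ≤ z
  · rw [(mem_piWithFibers.1 hf).2.2 (j + 1) (by rw [mem_Icc]; omega),
      runCounts_succ (mem_Icc.2 ⟨hj, hjz⟩)]
  · rw [hu j (by omega), Finset.card_eq_zero, filter_eq_empty_iff]
    intro x hx hfx
    have hT := mem_of_sum_eq_sum_mul_card_filter
      (sum_eq_sum_mul_card_filter_of_mem_piWithFibers hf) hx (by omega)
    rw [mem_Icc] at hT
    omega

lemma filter_piAntidiag_eq_piWithFibers (S : Finset ι) (hρ : ρ = ∑ j ∈ Icc 1 z, u j)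
    (hz : z = ∑ j ∈ Icc 1 z, j * u j) (hu : ∀ j, z < j → u j = 0) (hm : z + ρ ≤ m) :
    {f ∈ S.piAntidiag m | ∀ j, 1 ≤ j → #{x ∈ S | f x = j + 1} = u j} =
      piWithFibers S (Icc 1 (z + 1)) (runCounts (m - z - ρ) u) := by
  ext f
  rw [mem_filter]
  refine ⟨fun hf => mem_piWithFibers_runCounts hρ hz hu hm hf.1 hf.2, fun hf => ⟨?_, fun j hj =>
    card_filter_eq_of_mem_piWithFibers_runCounts hu hf hj⟩⟩
  obtain ⟨hsumf, hsupp, -⟩ := mem_piWithFibers.1 hf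
  exact mem_piAntidiag.2 ⟨hsumf.trans (sum_mul_runCounts hρ hz hm), hsupp⟩

theorem card_filter_piAntidiag_mul_prod_factorial (S : Finset ι) (hρ : ρ = ∑ j ∈ Icc 1 z, u j)
    (hz : z = ∑ j ∈ Icc 1 z, j * u j) (hu : ∀ j, z < j → u j = 0) (hm : z + ρ ≤ m) :
    #{f ∈ S.piAntidiag m | ∀ j, 1 ≤ j → #{x ∈ S | f x = j + 1} = u j} *
        (∏ j ∈ Icc 1 z, (u j)!) * (m - z - ρ)! = (m - z)! * (#S).choose (m - z) := by
  have hcount := card_piWithFibers_mul_prod_factorial S (Icc 1 (z + 1))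
    (runCounts (m - z - ρ) u) (by simp)
  rw [← filter_piAntidiag_eq_piWithFibers S hρ hz hu hm, prod_Icc_one_succ, sum_Icc_one_succ,
    prod_congr rfl fun j hj => by rw [runCounts_succ hj],
    sum_congr rfl fun j hj => runCounts_succ hj,
    ← hρ, runCounts, if_pos rfl, show m - z - ρ + ρ = m - z by omega,
    Nat.descFactorial_eq_factorial_mul_choose] at hcount
  rw [← hcount]
  ring

end RunType

/-- The number of `m`-element subsets of `{1,…,n-1}` of type
`λ = [1^{u 1} 2^{u 2} ⋯ z^{u z}]` (a partition of `z` with `ρ` parts), i.e. subsets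
having exactly `u j` maximal runs of consecutive elements of length `j + 1` for each
`j ≥ 1`, equals the multinomial coefficient `(m-z)! / (u₁! ⋯ u_z! (m-z-ρ)!)` times
`C(n-m, m-z)`.  (Stated multiplied through by the denominators.) -/
theorem count_subsets_of_type (n m z ρ : ℕ) (u : ℕ → ℕ)
    (hρ : ρ = ∑ j ∈ Finset.Icc 1 z, u j)
    (hz : z = ∑ j ∈ Finset.Icc 1 z, j * u j)
    (hu : ∀ j, z < j → u j = 0)
    (hm : z + ρ ≤ m) (hmn : m ≤ n - 1) :
    (((Finset.Icc 1 (n - 1)).powerset.filter (fun I : Finset ℕ =>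
        I.card = m ∧ ∀ j, 1 ≤ j →
          (I.filter (fun i => i - 1 ∉ I ∧ runLen I i = j + 1)).card = u j)).card)
      * (∏ j ∈ Finset.Icc 1 z, (u j).factorial) * (m - z - ρ).factorial
    = (m - z).factorial * Nat.choose (n - m) (m - z) := by
  have hbij := card_filter_powerset_eq_card_filter_piAntidiag (n - m) m
    fun p => ∀ j, 1 ≤ j → p j = u j
  beta_reduce at hbij
  rw [show n - m + m - 1 = n - 1 by omega] at hbij
  have hcount := card_filter_piAntidiag_mul_prod_factorial (Icc 1 (n - m)) hρ hz hu hm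
  rw [Nat.card_Icc, add_tsub_cancel_right, ← hbij] at hcount
  exact hcount
end

section
/- Let Γ be a connected graph on vertex set V with a consistent height labelling ω (meaning every cycle has incline 0), and let n > d·|V|. Fix u ∈ V, set b₁ = -min over walks p from u of ω(p) and b₂ = max over walks p from u of ω(p). Then the number of families (h_v)_{v∈V} of integers in [n] satisfying h_x = h_y + ω(x,y) for every edge xy of Γ equals n - b₁ - b₂. -/
/-- The incline of a walk: the sum of `ω` along its edges. -/
def incline {V : Type*} (G : SimpleGraph V) (ω : V → V → ℤ) :
    {u v : V} → G.Walk u v → ℤ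
  | _, _, SimpleGraph.Walk.nil => 0
  | u, _, SimpleGraph.Walk.cons (v := x) _ p => ω u x + incline G ω p

/-!
Since the inclines of walks from `u` are bounded, every closed walk at `u` has incline `0`
(otherwise going around it repeatedly makes inclines unbounded). With connectivity this makes
the incline of a walk from `u` to `v` a function `f v` of its endpoint, and the solutions of
`h x = h y + ω x y` on edges are exactly the translates `h = c - f`. Such a translate lies in
`[n]^V` iff `1 + max f ≤ c ≤ n + min f`, which gives `n - b₁ - b₂` choices of `c`; this number is
not negative because `b₁ + b₂` is the incline of a path, at most `d (|V| - 1)`.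
-/

open SimpleGraph

section Incline

variable {V : Type*} {G : SimpleGraph V} {ω : V → V → ℤ}

theorem incline_append {a b c : V} (p : G.Walk a b) (q : G.Walk b c) :
    incline G ω (p.append q) = incline G ω p + incline G ω q := by
  induction p with
  | nil => simp [incline]
  | cons _ p ih => simp [incline, ih, add_assoc]

theorem abs_incline_le_mul_length {d : ℤ} (hbd : ∀ x y, G.Adj x y → |ω x y| ≤ d)
    {a b : V} (p : G.Walk a b) : |incline G ω p| ≤ d * p.length := by
  induction p with
  | nil => simp [incline]
  | cons hadj p ih =>
    simp only [incline, Walk.length_cons]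
    push_cast
    calc |ω _ _ + incline G ω p| ≤ |ω _ _| + |incline G ω p| := abs_add_le _ _
      _ ≤ d + d * p.length := add_le_add (hbd _ _ hadj) ih
      _ = d * (p.length + 1) := by ring

theorem eq_add_incline_of_forall_adj {h : V → ℤ} (hh : ∀ x y, G.Adj x y → h x = h y + ω x y)
    {a b : V} (p : G.Walk a b) : h a = h b + incline G ω p := by
  induction p with
  | nil => simp [incline]
  | cons hadj p ih => rw [incline, hh _ _ hadj, ih, add_assoc, add_comm (incline G ω p)]

theorem exists_incline_eq_mul {u : V} (c : G.Walk u u) (k : ℕ) :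
    ∃ w : G.Walk u u, incline G ω w = k * incline G ω c := by
  induction k with
  | zero => exact ⟨.nil, by simp [incline]⟩
  | succ k ih =>
    obtain ⟨w, hw⟩ := ih
    exact ⟨w.append c, by rw [incline_append, hw]; push_cast; ring⟩

theorem incline_eq_zero_of_bounded {u : V} {lo hi : ℤ}
    (hlo : ∀ v (p : G.Walk u v), lo ≤ incline G ω p)
    (hhi : ∀ v (p : G.Walk u v), incline G ω p ≤ hi) (c : G.Walk u u) :
    incline G ω c = 0 := by
  rcases lt_trichotomy (incline G ω c) 0 with hneg | hzero | hpos
  · obtain ⟨w, hw⟩ := exists_incline_eq_mul (ω := ω) c ((-lo).toNat + 1)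
    have := hlo u w
    rw [hw] at this
    push_cast at this
    nlinarith [Int.self_le_toNat (-lo)]
  · exact hzero
  · obtain ⟨w, hw⟩ := exists_incline_eq_mul (ω := ω) c (hi.toNat + 1)
    have := hhi u w
    rw [hw] at this
    push_cast at this
    nlinarith [Int.self_le_toNat hi]

theorem incline_eq_of_closed_eq_zero (hconn : G.Preconnected) {u : V}
    (hzero : ∀ c : G.Walk u u, incline G ω c = 0) {a b : V} (p q : G.Walk a b) :
    incline G ω p = incline G ω q := by
  obtain ⟨r⟩ := hconn u a
  obtain ⟨s⟩ := hconn b u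
  have hp := hzero (r.append (p.append s))
  have hq := hzero (r.append (q.append s))
  simp only [incline_append] at hp hq
  linarith

theorem incline_le_mul_card [Fintype V] [DecidableEq V] {d : ℕ} (hbd : ∀ x y, G.Adj x y → |ω x y| ≤ d)
    (hindep : ∀ {a b : V} (p q : G.Walk a b), incline G ω p = incline G ω q)
    {a b : V} (p : G.Walk a b) : incline G ω p ≤ d * Fintype.card V := by
  have hlen : (p.bypass.length : ℤ) ≤ Fintype.card V := by
    exact_mod_cast p.bypass_isPath.length_lt.le
  calc incline G ω p = incline G ω p.bypass := hindep _ _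
    _ ≤ |incline G ω p.bypass| := le_abs_self _
    _ ≤ d * p.bypass.length := abs_incline_le_mul_length hbd _
    _ ≤ d * Fintype.card V := by gcongr

theorem setOf_forall_adj_eq_range (hconn : G.Preconnected) {u : V} {f : V → ℤ}
    (hf : ∀ v (p : G.Walk u v), incline G ω p = f v) :
    {h : V → ℤ | ∀ x y, G.Adj x y → h x = h y + ω x y} = Set.range fun c v => c - f v := by
  ext h
  constructor
  · intro hh
    refine ⟨h u, funext fun v => ?_⟩
    obtain ⟨p⟩ := hconn u v
    have := eq_add_incline_of_forall_adj hh p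
    rw [hf] at this
    linarith
  · rintro ⟨c, rfl⟩ x y hadj
    obtain ⟨p⟩ := hconn u x
    have hy := hf y (p.append (.cons hadj .nil))
    rw [incline_append, hf x p] at hy
    simp only [incline, add_zero] at hy
    simp only
    linarith

end Incline

theorem ncard_translates_mem_Icc {V : Type*} [Nonempty V] (f : V → ℤ) (n lo hi : ℤ)
    (hlo : ∀ v, lo ≤ f v) (hlo' : ∃ v, f v = lo) (hhi : ∀ v, f v ≤ hi) (hhi' : ∃ v, f v = hi) :
    ({h : V → ℤ | ∀ v, h v ∈ Set.Icc 1 n} ∩ Set.range fun c v => c - f v).ncard =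
      (n + lo - hi).toNat := by
  have himage : {h : V → ℤ | ∀ v, h v ∈ Set.Icc 1 n} ∩ (Set.range fun c v => c - f v) =
      (fun c v => c - f v) '' Set.Icc (1 + hi) (n + lo) := by
    ext h
    simp only [Set.mem_inter_iff, Set.mem_ofPred_eq, Set.mem_range, Set.mem_image, Set.mem_Icc]
    constructor
    · rintro ⟨hbox, c, rfl⟩
      obtain ⟨v₁, hv₁⟩ := hlo'
      obtain ⟨v₂, hv₂⟩ := hhi'
      have h₁ := (hbox v₁).2
      have h₂ := (hbox v₂).1
      exact ⟨c, ⟨by linarith, by linarith⟩, rfl⟩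
    · rintro ⟨c, ⟨hc₁, hc₂⟩, rfl⟩
      exact ⟨fun v => ⟨by linarith [hhi v], by linarith [hlo v]⟩, c, rfl⟩
  have hinj : Function.Injective fun (c : ℤ) (v : V) => c - f v := by
    intro c c' hcc
    simpa using congrFun hcc (Classical.arbitrary V)
  rw [himage, Set.ncard_image_of_injective _ hinj, ← Finset.coe_Icc, Set.ncard_coe_finset,
    Int.card_Icc]
  congr 1
  ring

theorem count_consistent_heights_general (V : Type*) [Fintype V] (d n : ℕ)
    (G : SimpleGraph V) (hconn : G.Connected)
    (ω : V → V → ℤ)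
    (hbd : ∀ x y, G.Adj x y → |ω x y| ≤ (d : ℤ))
    (hn : d * Fintype.card V < n)
    (u : V) (b₁ b₂ : ℤ)
    (hb1 : ∀ (v : V) (p : G.Walk u v), -b₁ ≤ incline G ω p)
    (hb1' : ∃ (v : V) (p : G.Walk u v), incline G ω p = -b₁)
    (hb2 : ∀ (v : V) (p : G.Walk u v), incline G ω p ≤ b₂)
    (hb2' : ∃ (v : V) (p : G.Walk u v), incline G ω p = b₂) :
    ({h : V → ℤ | (∀ v, h v ∈ Set.Icc 1 (n : ℤ)) ∧
        ∀ x y, G.Adj x y → h x = h y + ω x y}.ncard : ℤ) = n - b₁ - b₂ := by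
  classical
  have hclosed : ∀ c : G.Walk u u, incline G ω c = 0 := incline_eq_zero_of_bounded hb1 hb2
  have hindep : ∀ {a b : V} (p q : G.Walk a b), incline G ω p = incline G ω q :=
    incline_eq_of_closed_eq_zero hconn.preconnected hclosed
  set f : V → ℤ := fun v => incline G ω (hconn.preconnected u v).some
  have hf : ∀ v (p : G.Walk u v), incline G ω p = f v := fun v p => hindep _ _
  obtain ⟨v₁, p₁, hp₁⟩ := hb1'
  obtain ⟨v₂, p₂, hp₂⟩ := hb2'
  have hsum : b₁ + b₂ < n := by
    obtain ⟨r⟩ := hconn.preconnected v₁ u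
    have hr := hclosed (p₁.append r)
    have hle := incline_le_mul_card hbd hindep (r.append p₂)
    rw [incline_append] at hr hle
    have hn' : (d : ℤ) * Fintype.card V < n := by exact_mod_cast hn
    linarith
  have : Nonempty V := ⟨u⟩
  rw [Set.ofPred_and, setOf_forall_adj_eq_range hconn.preconnected hf,
    ncard_translates_mem_Icc f n (-b₁) b₂ (fun v => hb1 v _) ⟨v₁, hf v₁ p₁ ▸ hp₁⟩
      (fun v => hb2 v _) ⟨v₂, hf v₂ p₂ ▸ hp₂⟩]
  omega

/-- For a connected graph `Γ` with a consistent height labelling `ω` (every cycle has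
incline `0`), `n > d·|V|`, a fixed vertex `u`, `b₁ = -min_p ω(p)` and `b₂ = max_p ω(p)`
over walks `p` from `u`, the number of families `(h_v) ∈ [n]^V` with `h_x = h_y + ω(x,y)`
on every edge is `n - b₁ - b₂`. -/
theorem count_consistent_heights (V : Type*) [Fintype V] (d n : ℕ)
    (G : SimpleGraph V) (hconn : G.Connected)
    (ω : V → V → ℤ)
    (hanti : ∀ x y, ω x y = -ω y x)
    (hbd : ∀ x y, G.Adj x y → |ω x y| ≤ (d : ℤ))
    (hcons : ∀ (v : V) (p : G.Walk v v), p.IsCycle → incline G ω p = 0)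
    (hn : d * Fintype.card V < n)
    (u : V) (b₁ b₂ : ℤ)
    (hb1 : ∀ (v : V) (p : G.Walk u v), -b₁ ≤ incline G ω p)
    (hb1' : ∃ (v : V) (p : G.Walk u v), incline G ω p = -b₁)
    (hb2 : ∀ (v : V) (p : G.Walk u v), incline G ω p ≤ b₂)
    (hb2' : ∃ (v : V) (p : G.Walk u v), incline G ω p = b₂) :
    ({h : V → ℤ | (∀ v, h v ∈ Set.Icc 1 (n : ℤ)) ∧
        ∀ x y, G.Adj x y → h x = h y + ω x y}.ncard : ℤ) = n - b₁ - b₂ :=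
  count_consistent_heights_general V d n G hconn ω hbd hn u b₁ b₂ hb1 hb1' hb2 hb2'
end
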